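/- Define mutually recursive functions s, s' : ℕ → ℕ as follows. Successor rules: s(0) = 1; for n > 0 with c'(n) = (x,y): if y = 0 then s(n) = c(x,1); if y > 0 and n is even and x = 0 then s(n) = c(s(a), b) where (a,b) = c'(y); if y > 0 and n is even and x > 0 then s(n) = c(0, c(s'(x), y)); if y > 0 and n is odd, let (m,z) = c'(y): if m = 0 then s(n) = c(x, c(s(a), b)) where (a,b) = c'(z), and if m > 0 then s(n) = c(x, c(0, c(s'(m), z))). Predecessor rules: s'(1) = 0; for n > 1 with c'(n) = (x,y): if y = 1 then s'(n) = c(x,0); if n is even (so y is odd and y > 1), let (r,w) = c'(y): if r = 0 then s'(n) = c(x, c(s(a), b)) where (a,b) = c'(w), and if r > 0 then s'(n) = c(x, c(0, c(s'(r), w))); if n is odd: if x = 0 then s'(n) = c(s(a), b) where (a,b) = c'(y), and if x > 0 then s'(n) = c(0, c(s'(x), y)). Then for every natural number n, s(n) = n + 1, and for every n > 0, s'(n) = n − 1; in particular s is a bijection from ℕ onto the positive naturals, s' is its inverse, and (ℕ, 0, s) is a Peano algebra. -/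

import Mathlib

/-- The pairing function `c`. -/
def c (i j : ℕ) : ℕ := if Odd j then 2 ^ (i + 1) * j else 2 ^ (i + 1) * (j + 1) - 1

/-- The inverse of `c` on positive naturals (returns `(0,0)` at `0`). -/
def c' (n : ℕ) : ℕ × ℕ :=
  (padicValNat 2 (n + n % 2) - 1, (n + n % 2) / 2 ^ padicValNat 2 (n + n % 2) - n % 2)

lemma c'_fst_lt {n : ℕ} (hn : 0 < n) : (c' n).1 < n := by
  have hm : 0 < n + n % 2 := by omega
  have hdvd : (2 : ℕ) ^ padicValNat 2 (n + n % 2) ∣ (n + n % 2) := pow_padicValNat_dvd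
  have hle : (2 : ℕ) ^ padicValNat 2 (n + n % 2) ≤ n + n % 2 := Nat.le_of_dvd hm hdvd
  have hlt : padicValNat 2 (n + n % 2) < 2 ^ padicValNat 2 (n + n % 2) := by
    first | exact Nat.lt_two_pow_self | exact Nat.lt_two_pow_self _
  simp only [c']
  generalize hv : padicValNat 2 (n + n % 2) = v at *
  generalize hp : (2 : ℕ) ^ v = p at *
  omega

lemma c'_snd_lt {n : ℕ} (hn : 0 < n) : (c' n).2 < n := by
  have hm : 0 < n + n % 2 := by omega
  have h2 : (2 : ℕ) ∣ (n + n % 2) := by omega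
  have hv : 1 ≤ padicValNat 2 (n + n % 2) := one_le_padicValNat_of_dvd hm.ne' h2
  have h2le : (2 : ℕ) ≤ 2 ^ padicValNat 2 (n + n % 2) := by
    calc (2:ℕ) = 2 ^ 1 := (pow_one 2).symm
    _ ≤ 2 ^ padicValNat 2 (n + n % 2) := Nat.pow_le_pow_right (by norm_num) hv
  have hle : (n + n % 2) / 2 ^ padicValNat 2 (n + n % 2) ≤ (n + n % 2) / 2 :=
    Nat.div_le_div_left h2le (by norm_num)
  simp only [c']
  generalize hq : (n + n % 2) / 2 ^ padicValNat 2 (n + n % 2) = q at *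
  omega

lemma c'_fst_lt_of_lt {m n : ℕ} (h : m < n) : (c' m).1 < n := by
  rcases Nat.eq_zero_or_pos m with rfl | hm
  · simp [c']; omega
  · exact lt_trans (c'_fst_lt hm) h

lemma c'_snd_lt_of_lt {m n : ℕ} (h : m < n) : (c' m).2 < n := by
  rcases Nat.eq_zero_or_pos m with rfl | hm
  · simp [c']; omega
  · exact lt_trans (c'_snd_lt hm) h

mutual
/-- successor -/
def s : ℕ → ℕ
  | 0 => 1
  | n + 1 =>
    if h0 : (c' (n + 1)).2 = 0 then c (c' (n + 1)).1 1
    else if he : (n + 1) % 2 = 0 then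
      if hx : (c' (n + 1)).1 = 0 then
        c (s (c' ((c' (n + 1)).2)).1) (c' ((c' (n + 1)).2)).2
      else
        c 0 (c (s' (c' (n + 1)).1) (c' (n + 1)).2)
    else
      if hm : (c' ((c' (n + 1)).2)).1 = 0 then
        c (c' (n + 1)).1
          (c (s (c' ((c' ((c' (n + 1)).2)).2)).1) (c' ((c' ((c' (n + 1)).2)).2)).2)
      else
        c (c' (n + 1)).1
          (c 0 (c (s' (c' ((c' (n + 1)).2)).1) (c' ((c' (n + 1)).2)).2))
  termination_by n => n
  decreasing_by
    all_goals first
      | exact c'_fst_lt_of_lt (c'_snd_lt (Nat.succ_pos n))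
      | exact c'_fst_lt_of_lt (c'_snd_lt_of_lt (c'_snd_lt (Nat.succ_pos n)))
      | exact c'_fst_lt (Nat.succ_pos n)

/-- predecessor (with `s' 0 = 0` by convention) -/
def s' : ℕ → ℕ
  | 0 => 0
  | 1 => 0
  | n + 2 =>
    if h1 : (c' (n + 2)).2 = 1 then c (c' (n + 2)).1 0
    else if he : (n + 2) % 2 = 0 then
      if hr : (c' ((c' (n + 2)).2)).1 = 0 then
        c (c' (n + 2)).1
          (c (s (c' ((c' ((c' (n + 2)).2)).2)).1) (c' ((c' ((c' (n + 2)).2)).2)).2)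
      else
        c (c' (n + 2)).1
          (c 0 (c (s' (c' ((c' (n + 2)).2)).1) (c' ((c' (n + 2)).2)).2))
    else
      if hx : (c' (n + 2)).1 = 0 then
        c (s (c' ((c' (n + 2)).2)).1) (c' ((c' (n + 2)).2)).2
      else
        c 0 (c (s' (c' (n + 2)).1) (c' (n + 2)).2)
  termination_by n => n
  decreasing_by
    all_goals first
      | exact c'_fst_lt_of_lt (c'_snd_lt (by omega))
      | exact c'_fst_lt_of_lt (c'_snd_lt_of_lt (c'_snd_lt (by omega)))
      | exact c'_fst_lt (by omega)
end



/-! Every positive integer is `c x y` for a unique pair, namely `2 ^ (x + 1) * y` with `y` odd or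
`2 ^ (x + 1) * (y + 1) - 1` with `y` even. By strong induction (the recursive arguments are
components of `c'`, hence smaller) the recursive calls may be replaced by `a + 1` and `a - 1`, and
then every rule for `s` and `s'` reduces to one of three identities: for even `j`,
`c i j + 1 = c i (j + 1)` and `c 0 (c i j) + 1 = c (i + 1) j`; for odd `j`,
`c 0 (c i j) = c (i + 1) j + 1`. The rules for odd `n = c x y` apply, inside `c x ·`, the rules for
the even number `y`, and dually for `s'`. -/

lemma c_of_odd {i j : ℕ} (hj : Odd j) : c i j = 2 ^ (i + 1) * j := if_pos hj

lemma c_of_even {i j : ℕ} (hj : Even j) : c i j = 2 ^ (i + 1) * (j + 1) - 1 :=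
  if_neg (Nat.not_odd_iff_even.2 hj)

lemma c_pos (i j : ℕ) : 0 < c i j := by
  rcases Nat.even_or_odd j with hj | hj
  · rw [c_of_even hj]
    have : 2 ≤ 2 ^ (i + 1) * (j + 1) :=
      le_mul_of_le_of_one_le (Nat.le_self_pow i.succ_ne_zero 2) j.succ_pos
    omega
  · rw [c_of_odd hj]
    exact Nat.mul_pos (by positivity) hj.pos

lemma odd_c_iff {i j : ℕ} : Odd (c i j) ↔ Even j := by
  rcases Nat.even_or_odd j with hj | hj
  · rw [c_of_even hj, Nat.odd_sub (Nat.one_le_iff_ne_zero.2 (by positivity))]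
    simp [pow_succ, hj]
  · simp [c_of_odd hj, pow_succ, Nat.odd_mul, Nat.not_even_iff_odd.2 hj]

lemma even_c_iff {i j : ℕ} : Even (c i j) ↔ Odd j := by
  rw [← Nat.not_odd_iff_even, odd_c_iff, Nat.not_even_iff_odd]

lemma c_add_one_of_even {i j : ℕ} (hj : Even j) : c i j + 1 = c i (j + 1) := by
  rw [c_of_even hj, c_of_odd hj.add_one]
  have : 0 < 2 ^ (i + 1) * (j + 1) := by positivity
  omega

lemma c_zero_c_add_one_of_even {i j : ℕ} (hj : Even j) : c 0 (c i j) + 1 = c (i + 1) j := by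
  rw [c_of_odd (odd_c_iff.2 hj), c_of_even hj, c_of_even hj, pow_succ 2 (i + 1)]
  have : 0 < 2 ^ (i + 1) * (j + 1) := by positivity
  rw [mul_right_comm]
  omega

lemma c_zero_c_of_odd {i j : ℕ} (hj : Odd j) : c 0 (c i j) = c (i + 1) j + 1 := by
  rw [c_of_even (even_c_iff.2 hj), c_of_odd hj, c_of_odd hj, pow_succ 2 (i + 1), mul_right_comm]
  omega

lemma padicValNat_two_pow_mul_of_odd (k : ℕ) {u : ℕ} (hu : Odd u) :
    padicValNat 2 (2 ^ k * u) = k := by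
  rw [padicValNat.mul (by positivity) hu.pos.ne', padicValNat.prime_pow,
    padicValNat.eq_zero_of_not_dvd hu.not_two_dvd_nat, add_zero]

lemma c'_eq_of_add_mod_two_eq {n k u : ℕ} (hu : Odd u) (h : n + n % 2 = 2 ^ (k + 1) * u) :
    c' n = (k, u - n % 2) := by
  simp only [c', h, padicValNat_two_pow_mul_of_odd _ hu, Nat.add_sub_cancel,
    Nat.mul_div_cancel_left _ (Nat.two_pow_pos _)]

lemma c'_c (i j : ℕ) : c' (c i j) = (i, j) := by
  rcases Nat.even_or_odd j with hj | hj
  · have hmod : c i j % 2 = 1 := Nat.odd_iff.1 (odd_c_iff.2 hj)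
    have h := c_add_one_of_even (i := i) hj
    rw [c_of_odd hj.add_one] at h
    rw [c'_eq_of_add_mod_two_eq (k := i) hj.add_one (by rw [hmod, h]), hmod, Nat.add_sub_cancel]
  · have hmod : c i j % 2 = 0 := Nat.even_iff.1 (even_c_iff.2 hj)
    rw [c'_eq_of_add_mod_two_eq (k := i) hj (by rw [hmod, add_zero, c_of_odd hj]), hmod, Nat.sub_zero]

lemma exists_c_eq_of_pos {n : ℕ} (hn : 0 < n) : ∃ i j, c i j = n := by
  rcases Nat.even_or_odd n with he | ho
  · obtain ⟨k, u, hu, rfl⟩ := Nat.exists_eq_two_pow_mul_odd hn.ne'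
    obtain ⟨i, rfl⟩ : ∃ i, k = i + 1 :=
      Nat.exists_eq_add_one.2 (Nat.pos_of_ne_zero (by
        rintro rfl
        exact Nat.not_even_iff_odd.2 hu (by simpa using he)))
    exact ⟨i, u, c_of_odd hu⟩
  · obtain ⟨k, u, hu, hk⟩ := Nat.exists_eq_two_pow_mul_odd n.add_one_ne_zero
    obtain ⟨i, rfl⟩ : ∃ i, k = i + 1 :=
      Nat.exists_eq_add_one.2 (Nat.pos_of_ne_zero (by
        rintro rfl
        exact Nat.not_even_iff_odd.2 hu (by simpa [hk] using ho.add_one)))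
    have hu1 : Even (u - 1) := Nat.Odd.sub_odd hu odd_one
    refine ⟨i, u - 1, ?_⟩
    rw [c_of_even hu1, Nat.sub_add_cancel hu.pos, ← hk, Nat.add_sub_cancel]

lemma left_lt_c (i j : ℕ) : i < c i j := by
  simpa [c'_c] using c'_fst_lt (c_pos i j)

lemma right_lt_c (i j : ℕ) : j < c i j := by
  simpa [c'_c] using c'_snd_lt (c_pos i j)

lemma c_sub_one_of_odd {i j : ℕ} (hj : Odd j) : c i j - 1 = c i (j - 1) := by
  obtain ⟨k, rfl⟩ := hj
  rw [Nat.add_sub_cancel, ← c_add_one_of_even (even_two_mul k), Nat.add_sub_cancel]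

lemma c_s_c'_of_odd {w : ℕ} (hw : Odd w) (hs : ∀ m < w, s m = m + 1) :
    c (s (c' w).1) (c' w).2 = c 0 w + 1 := by
  obtain ⟨a, b, rfl⟩ := exists_c_eq_of_pos hw.pos
  rw [c'_c, hs a (left_lt_c a b), c_zero_c_add_one_of_even (odd_c_iff.1 hw)]

lemma c_s_c'_add_one_of_even {w : ℕ} (hw : Even w) (hw0 : w ≠ 0) (hs : ∀ m < w, s m = m + 1) :
    c (s (c' w).1) (c' w).2 + 1 = c 0 w := by
  obtain ⟨a, b, rfl⟩ := exists_c_eq_of_pos (Nat.pos_of_ne_zero hw0)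
  rw [c'_c, hs a (left_lt_c a b), c_zero_c_of_odd (even_c_iff.1 hw)]

lemma c_zero_c_s'_of_odd {x y : ℕ} (hx : x ≠ 0) (hy : Odd y) (hs' : s' x = x - 1) :
    c 0 (c (s' x) y) = c x y + 1 := by
  obtain ⟨x, rfl⟩ := Nat.exists_eq_add_one.2 (Nat.pos_of_ne_zero hx)
  rw [hs', Nat.add_sub_cancel, c_zero_c_of_odd hy]

lemma c_zero_c_s'_add_one_of_even {x y : ℕ} (hx : x ≠ 0) (hy : Even y) (hs' : s' x = x - 1) :
    c 0 (c (s' x) y) + 1 = c x y := by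
  obtain ⟨x, rfl⟩ := Nat.exists_eq_add_one.2 (Nat.pos_of_ne_zero hx)
  rw [hs', Nat.add_sub_cancel, c_zero_c_add_one_of_even hy]

lemma s_c_of_forall_lt {x y : ℕ} (ih : ∀ m < c x y, s m = m + 1 ∧ (0 < m → s' m = m - 1)) :
    s (c x y) = c x y + 1 := by
  have hs (n) (hle : n ≤ c x y) : ∀ m < n, s m = m + 1 := fun m hm => (ih m (hm.trans_le hle)).1
  obtain ⟨k, hk⟩ := Nat.exists_eq_add_one.2 (c_pos x y)
  rw [hk, s, ← hk]
  simp only [c'_c, ← Nat.even_iff, even_c_iff]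
  split_ifs with hy0 hy hx hm
  · rw [hy0, c_add_one_of_even Even.zero]
  · rw [c_s_c'_of_odd hy (hs y (right_lt_c x y).le), hx]
  · exact c_zero_c_s'_of_odd hx hy ((ih x (left_lt_c x y)).2 (Nat.pos_of_ne_zero hx))
  all_goals
    have hy : Even y := Nat.not_odd_iff_even.1 hy
    obtain ⟨m, z, rfl⟩ := exists_c_eq_of_pos (Nat.pos_of_ne_zero hy0)
    have hz : Odd z := even_c_iff.1 hy
    simp only [c'_c] at hm ⊢
    rw [c_add_one_of_even hy]
  · rw [hm, c_s_c'_of_odd hz (hs z ((right_lt_c m z).trans (right_lt_c x _)).le)]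
  · have hmx : m < c x (c m z) := (left_lt_c m z).trans (right_lt_c x _)
    rw [c_zero_c_s'_of_odd hm hz ((ih m hmx).2 (Nat.pos_of_ne_zero hm))]

lemma s'_c_of_forall_lt {x y : ℕ} (hn : 1 < c x y)
    (ih : ∀ m < c x y, s m = m + 1 ∧ (0 < m → s' m = m - 1)) :
    s' (c x y) = c x y - 1 := by
  have hs (n) (hle : n ≤ c x y) : ∀ m < n, s m = m + 1 := fun m hm => (ih m (hm.trans_le hle)).1
  obtain ⟨k, hk⟩ := Nat.exists_eq_add_of_le' hn
  rw [hk, s', ← hk]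
  simp only [c'_c, ← Nat.even_iff, even_c_iff]
  split_ifs with hy1 hy hr hx
  · rw [hy1, c_sub_one_of_odd odd_one]
    rfl
  · obtain ⟨r, w, rfl⟩ := exists_c_eq_of_pos hy.pos
    simp only [c'_c] at hr ⊢
    subst hr
    have hw0 : w ≠ 0 := by
      rintro rfl
      exact hy1 rfl
    rw [c_sub_one_of_odd hy, ← c_s_c'_add_one_of_even (odd_c_iff.1 hy) hw0
      (hs w ((right_lt_c 0 w).trans (right_lt_c x _)).le), Nat.add_sub_cancel]
  · obtain ⟨r, w, rfl⟩ := exists_c_eq_of_pos hy.pos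
    simp only [c'_c] at hr ⊢
    have hrx : r < c x (c r w) := (left_lt_c r w).trans (right_lt_c x _)
    rw [c_sub_one_of_odd hy, ← c_zero_c_s'_add_one_of_even hr (odd_c_iff.1 hy)
      ((ih r hrx).2 (Nat.pos_of_ne_zero hr)), Nat.add_sub_cancel]
  · subst hx
    have hy0 : y ≠ 0 := by
      rintro rfl
      exact hn.ne rfl
    rw [← c_s_c'_add_one_of_even (Nat.not_odd_iff_even.1 hy) hy0 (hs y (right_lt_c 0 y).le),
      Nat.add_sub_cancel]
  · rw [← c_zero_c_s'_add_one_of_even hx (Nat.not_odd_iff_even.1 hy)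
      ((ih x (left_lt_c x y)).2 (Nat.pos_of_ne_zero hx)), Nat.add_sub_cancel]

lemma s_eq_add_one_and_s'_eq_sub_one (n : ℕ) : s n = n + 1 ∧ (0 < n → s' n = n - 1) := by
  induction n using Nat.strong_induction_on with
  | _ n ih =>
  rcases Nat.eq_zero_or_pos n with rfl | hn
  · exact ⟨by rw [s], fun h => absurd h (lt_irrefl 0)⟩
  obtain ⟨x, y, rfl⟩ := exists_c_eq_of_pos hn
  refine ⟨s_c_of_forall_lt ih, fun _ => ?_⟩
  rcases (Nat.one_le_iff_ne_zero.2 hn.ne').lt_or_eq with h1 | h1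
  · exact s'_c_of_forall_lt h1 ih
  · rw [← h1, s']

lemma s_eq_add_one (n : ℕ) : s n = n + 1 := (s_eq_add_one_and_s'_eq_sub_one n).1

lemma s'_eq_sub_one {n : ℕ} (hn : 0 < n) : s' n = n - 1 := (s_eq_add_one_and_s'_eq_sub_one n).2 hn

theorem s_is_succ_s'_is_pred :
    (∀ n : ℕ, s n = n + 1) ∧
    (∀ n : ℕ, 0 < n → s' n = n - 1) ∧
    Set.BijOn s Set.univ {n : ℕ | 0 < n} ∧
    (∀ n : ℕ, 0 < n → s (s' n) = n) ∧
    (∀ n : ℕ, s' (s n) = n) ∧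
    (∀ n : ℕ, s n ≠ 0) ∧
    Function.Injective s ∧
    (∀ P : ℕ → Prop, P 0 → (∀ n, P n → P (s n)) → ∀ n, P n) := by
  have hs : s = (· + 1) := funext s_eq_add_one
  refine ⟨s_eq_add_one, fun n => s'_eq_sub_one, ?_, fun n hn => ?_, fun n => ?_, ?_, ?_, ?_⟩
  · rw [hs]
    exact ⟨fun n _ => n.succ_pos, (add_left_injective 1).injOn,
      fun n hn => ⟨n - 1, trivial, Nat.sub_add_cancel hn⟩⟩
  · rw [s'_eq_sub_one hn, s_eq_add_one, Nat.sub_add_cancel hn]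
  · rw [s_eq_add_one, s'_eq_sub_one (Nat.add_one_pos n), Nat.add_sub_cancel]
  · simp [hs]
  · rw [hs]
    exact add_left_injective 1
  · rw [hs]
    exact fun P h0 hstep n => Nat.rec h0 hstep n
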